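/- Let S, n₁, n₂ ≥ 1 and m₁,…,m_S ≥ 1, let K₀ ⊆ ℝ^{n₁} and K_i ⊆ ℝ^{n₂} (i ∈ {1,…,S}) be cones, and let F_i ∈ ℝ^{m_i×n₁}, G_i ∈ ℝ^{m_i×n₂}, r_i ∈ ℝ^{m_i} be such that for every i the set {(x, y) ∈ K₀ × K_i : F_i x + G_i y = 0} contains only the zero vector. Suppose the connected component (X̃, (Z̃_i, Ỹ_i)_{i=1}^S), with shared block X̃ a symmetric (1+n₁)×(1+n₁) matrix, belongs to CMP(ℝ₊ × K₀, K₁,…,K_S), that the (1,1) entry of X̃ equals 0, and that for every i ∈ {1,…,S} the Frobenius inner product of the block matrix [[X̃, Z̃_iᵀ],[Z̃_i, Ỹ_i]] with the matrix (−r_i F_i G_i)ᵀ(−r_i F_i G_i) equals 0, where (−r_i F_i G_i) is the m_i×(1+n₁+n₂) matrix with column blocks −r_i, F_i, G_i. Then X̃ = 0, and Z̃_i = 0 and Ỹ_i = 0 for every i ∈ {1,…,S}. -/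

import Mathlib

open Matrix

/-- A cone: a set closed under multiplication by nonnegative scalars. -/
def IsCone {d : Type*} (K : Set (d → ℝ)) : Prop :=
  ∀ c : ℝ, 0 ≤ c → ∀ x ∈ K, c • x ∈ K

/-- The product `A × B` of sets of vectors, realized as block vectors indexed by `p ⊕ q`. -/
def SetProd {p q : Type*} (A : Set (p → ℝ)) (B : Set (q → ℝ)) : Set (p ⊕ q → ℝ) :=
  {v | (fun i => v (Sum.inl i)) ∈ A ∧ (fun j => v (Sum.inr j)) ∈ B}

/-- The Frobenius inner product `M • N = trace (Mᵀ N)` of two matrices. -/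
def frob {m n : Type*} [Fintype m] [Fintype n] (A B : Matrix m n ℝ) : ℝ :=
  Matrix.trace (Aᵀ * B)

/-- The cone `CMP(K₀, K₁, …, K_S)` of completable, completely positive connected
components: the convex hull of the tuples
`(x xᵀ, (y_i xᵀ, y_i y_iᵀ)_{i})` with `x ∈ K₀` and `y_i ∈ K_i`. -/
def CMP {ι₀ ι₁ : Type*} {S : ℕ} (K₀ : Set (ι₀ → ℝ)) (Ki : Fin S → Set (ι₁ → ℝ)) :
    Set (Matrix ι₀ ι₀ ℝ × (Fin S → Matrix ι₁ ι₀ ℝ × Matrix ι₁ ι₁ ℝ)) :=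
  convexHull ℝ {T | ∃ x ∈ K₀, ∃ y : Fin S → ι₁ → ℝ, (∀ i, y i ∈ Ki i) ∧
    T = (Matrix.vecMulVec x x,
      fun i => (Matrix.vecMulVec (y i) x, Matrix.vecMulVec (y i) (y i)))}


/-!
Every generator `(x xᵀ, (y_i xᵀ, y_i y_iᵀ)_i)` of `CMP` gives nonnegative values to the linear
functionals `T ↦ X₁₁` and `T ↦ [[X, Z_iᵀ], [Z_i, Y_i]] • A_iᵀ A_i`, where `A_i = (-r_i F_i G_i)`:
the values are `x₁²` and `‖A_i (x; y_i)‖²`. So a point of the convex hull at which all these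
functionals vanish is a convex combination of generators at which they vanish. For such a generator
`x₁ = 0`, hence `F_i x' + G_i y_i = 0` for `x = (x₁; x')`, and the trivial-intersection hypothesis
forces `x' = 0` and every `y_i = 0`.
-/

section ConvexFace

variable {𝕜 E J : Type*} [Field 𝕜] [LinearOrder 𝕜] [IsStrictOrderedRing 𝕜]
  [AddCommGroup E] [Module 𝕜 E] {s : Set E} {x : E}

theorem mem_convexHull_setOf_forall_eq_zero (f : J → E →ₗ[𝕜] 𝕜)
    (hf : ∀ j, ∀ y ∈ s, 0 ≤ f j y) (hx : x ∈ convexHull 𝕜 s) (hfx : ∀ j, f j x = 0) :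
    x ∈ convexHull 𝕜 {y ∈ s | ∀ j, f j y = 0} := by
  classical
  obtain ⟨ι, _, w, z, hw₀, hw₁, hz, rfl⟩ := mem_convexHull_iff_exists_fintype.1 hx
  have hface : ∀ i, w i ≠ 0 → ∀ j, f j (z i) = 0 := by
    intro i hi j
    have hsum : ∑ k, w k * f j (z k) = 0 := by simpa using hfx j
    have hterm := (Finset.sum_eq_zero_iff_of_nonneg fun k _ =>
      mul_nonneg (hw₀ k) (hf j _ (hz k))).1 hsum i (Finset.mem_univ i)
    exact (mul_eq_zero.1 hterm).resolve_left hi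
  set t := Finset.univ.filter (w · ≠ 0)
  have ht : ∑ i ∈ t, w i = 1 := by rw [Finset.sum_filter_ne_zero, hw₁]
  have hcm : t.centerMass w z = ∑ i, w i • z i := by
    rw [Finset.centerMass_eq_of_sum_1 _ _ ht]
    exact Finset.sum_filter_of_ne fun i _ h hi => h (by simp [hi])
  rw [← hcm]
  exact t.centerMass_mem_convexHull (fun i _ => hw₀ i) (ht ▸ one_pos)
    fun i hi => ⟨hz i, hface i (Finset.mem_filter.1 hi).2⟩

theorem eq_zero_of_mem_convexHull (f : J → E →ₗ[𝕜] 𝕜) (hf : ∀ j, ∀ y ∈ s, 0 ≤ f j y)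
    (hs : ∀ y ∈ s, (∀ j, f j y = 0) → y = 0) (hx : x ∈ convexHull 𝕜 s)
    (hfx : ∀ j, f j x = 0) : x = 0 := by
  have hsub : {y ∈ s | ∀ j, f j y = 0} ⊆ {0} := fun y hy => hs y hy.1 hy.2
  simpa using convexHull_mono hsub (mem_convexHull_setOf_forall_eq_zero f hf hx hfx)

end ConvexFace

namespace Matrix

variable {α l m n o : Type*}

theorem fromBlocks_vecMulVec [Mul α] (u : m → α) (v : n → α) (u' : l → α) (v' : o → α) :
    fromBlocks (vecMulVec u u') (vecMulVec u v') (vecMulVec v u') (vecMulVec v v') =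
      vecMulVec (Sum.elim u v) (Sum.elim u' v') := by
  ext (i | i) (j | j) <;> rfl

theorem fromCols_fromCols_mulVec_sumElim [Fintype n] [Fintype o] [CommSemiring α]
    (c : m → α) (F : Matrix m n α) (G : Matrix m o α) (x : Fin 1 ⊕ n → α) (y : o → α) :
    fromCols (fromCols (of fun k (_ : Fin 1) => c k) F) G *ᵥ Sum.elim x y =
      x (Sum.inl 0) • c + F *ᵥ (x ∘ Sum.inr) + G *ᵥ y := by
  conv_lhs => rw [← Sum.elim_comp_inl_inr x, fromCols_mulVec_sumElim, fromCols_mulVec_sumElim]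
  ext k
  simp [mulVec, dotProduct, mul_comm]

end Matrix

theorem frob_vecMulVec_transpose_mul {l n : Type*} [Fintype l] [Fintype n] (u : n → ℝ)
    (A : Matrix l n ℝ) : frob (vecMulVec u u) (Aᵀ * A) = (A *ᵥ u) ⬝ᵥ (A *ᵥ u) := by
  rw [frob, transpose_vecMulVec, ← Matrix.mul_assoc, vecMulVec_mul, vecMulVec_mul, trace_vecMulVec,
    vecMul_transpose, dotProduct_comm, ← dotProduct_mulVec]

section ConnectedComponent

variable {ι₀ ι₁ : Type*} [Fintype ι₀] [Fintype ι₁] {S : ℕ}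

@[simps]
def blockFrob (i : Fin S) (M : Matrix (ι₀ ⊕ ι₁) (ι₀ ⊕ ι₁) ℝ) :
    Matrix ι₀ ι₀ ℝ × (Fin S → Matrix ι₁ ι₀ ℝ × Matrix ι₁ ι₁ ℝ) →ₗ[ℝ] ℝ where
  toFun T := frob (fromBlocks T.1 (T.2 i).1ᵀ (T.2 i).1 (T.2 i).2) M
  map_add' T T' := by
    simp only [frob, Prod.fst_add, Prod.snd_add, Pi.add_apply, transpose_add, ← fromBlocks_add,
      Matrix.add_mul, trace_add]
  map_smul' c T := by
    simp only [frob, Prod.smul_fst, Prod.smul_snd, Pi.smul_apply, transpose_smul,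
      ← fromBlocks_smul, Matrix.smul_mul, trace_smul, smul_eq_mul, RingHom.id_apply]

theorem blockFrob_transpose_mul_self_vecMulVec {l : Type*} [Fintype l] (i : Fin S)
    (A : Matrix l (ι₀ ⊕ ι₁) ℝ) (x : ι₀ → ℝ) (y : Fin S → ι₁ → ℝ) :
    blockFrob i (Aᵀ * A) (vecMulVec x x, fun i => (vecMulVec (y i) x, vecMulVec (y i) (y i))) =
      (A *ᵥ Sum.elim x (y i)) ⬝ᵥ (A *ᵥ Sum.elim x (y i)) := by
  rw [blockFrob_apply, transpose_vecMulVec, fromBlocks_vecMulVec, frob_vecMulVec_transpose_mul]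

end ConnectedComponent

theorem eq_zero_of_augmented_mulVec_eq_zero {m n₁ n₂ : Type*} [Fintype n₁] [Fintype n₂]
    {K₀ : Set (n₁ → ℝ)} {K : Set (n₂ → ℝ)} {F : Matrix m n₁ ℝ} {G : Matrix m n₂ ℝ}
    {r : m → ℝ}
    (htriv : ∀ x ∈ K₀, ∀ y ∈ K, F *ᵥ x + G *ᵥ y = 0 → x = 0 ∧ y = 0)
    {x : Fin 1 ⊕ n₁ → ℝ} {y : n₂ → ℝ} (hx : x ∘ Sum.inr ∈ K₀) (hy : y ∈ K)
    (hx₀ : x (Sum.inl 0) = 0)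
    (h : fromCols (fromCols (of fun k (_ : Fin 1) => -r k) F) G *ᵥ Sum.elim x y = 0) :
    x = 0 ∧ y = 0 := by
  rw [fromCols_fromCols_mulVec_sumElim, hx₀, zero_smul, zero_add] at h
  obtain ⟨hx', rfl⟩ := htriv _ hx _ hy h
  refine ⟨funext fun a => ?_, rfl⟩
  rcases a with a | a
  · rwa [Fin.fin_one_eq_zero a]
  · exact congrFun hx' a

theorem stmt_13_general (S n₁ n₂ : ℕ) (hS : 1 ≤ S)
    (m : Fin S → ℕ)
    (K₀ : Set (Fin n₁ → ℝ))
    (Ki : Fin S → Set (Fin n₂ → ℝ))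
    (F : ∀ i : Fin S, Matrix (Fin (m i)) (Fin n₁) ℝ)
    (G : ∀ i : Fin S, Matrix (Fin (m i)) (Fin n₂) ℝ)
    (r : ∀ i : Fin S, Fin (m i) → ℝ)
    (htriv : ∀ i : Fin S, ∀ x ∈ K₀, ∀ y ∈ Ki i,
      (F i).mulVec x + (G i).mulVec y = 0 → x = 0 ∧ y = 0)
    (Xt : Matrix (Fin 1 ⊕ Fin n₁) (Fin 1 ⊕ Fin n₁) ℝ)
    (Zt : Fin S → Matrix (Fin n₂) (Fin 1 ⊕ Fin n₁) ℝ)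
    (Yt : Fin S → Matrix (Fin n₂) (Fin n₂) ℝ)
    (hmem : (Xt, fun i => (Zt i, Yt i)) ∈
      CMP (SetProd {v : Fin 1 → ℝ | 0 ≤ v 0} K₀) Ki)
    (h11 : Xt (Sum.inl 0) (Sum.inl 0) = 0)
    (horth : ∀ i, frob (Matrix.fromBlocks Xt (Zt i)ᵀ (Zt i) (Yt i))
      ((Matrix.fromCols (Matrix.fromCols
          (Matrix.of fun l (_ : Fin 1) => -r i l) (F i)) (G i))ᵀ *
        (Matrix.fromCols (Matrix.fromCols
          (Matrix.of fun l (_ : Fin 1) => -r i l) (F i)) (G i))) = 0) :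
    Xt = 0 ∧ ∀ i, Zt i = 0 ∧ Yt i = 0 := by
  let A i := fromCols (fromCols (of fun l (_ : Fin 1) => -r i l) (F i)) (G i)
  let f (j : Option (Fin S)) := j.elim
    ((entryLinearMap ℝ ℝ (Sum.inl 0) (Sum.inl 0)).comp (LinearMap.fst ℝ _ _))
    fun i => blockFrob i ((A i)ᵀ * A i)
  have hzero : (Xt, fun i => (Zt i, Yt i)) = 0 := by
    refine eq_zero_of_mem_convexHull f ?_ ?_ hmem ?_
    · rintro (_ | i) _ ⟨x, -, y, -, rfl⟩
      · exact mul_self_nonneg _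
      · exact (blockFrob_transpose_mul_self_vecMulVec i (A i) x y).symm ▸
          Fintype.sum_nonneg fun _ => mul_self_nonneg _
    · rintro _ ⟨x, hx, y, hy, rfl⟩ hf
      have hx₀ : x (Sum.inl 0) = 0 := mul_self_eq_zero.1 (hf none)
      have hA i : A i *ᵥ Sum.elim x (y i) = 0 := dotProduct_self_eq_zero.1 <|
        (blockFrob_transpose_mul_self_vecMulVec i (A i) x y).symm.trans (hf (some i))
      have hxy i := eq_zero_of_augmented_mulVec_eq_zero (htriv i) hx.2 (hy i) hx₀ (hA i)
      obtain ⟨rfl, -⟩ := hxy ⟨0, hS⟩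
      simp only [funext fun i => (hxy i).2, vecMulVec_zero, zero_vecMulVec]
      rfl
    · rintro (_ | i)
      exacts [h11, horth i]
  simpa [Prod.ext_iff, funext_iff] using hzero

theorem stmt_13 (S n₁ n₂ : ℕ) (hS : 1 ≤ S) (h₁ : 1 ≤ n₁) (h₂ : 1 ≤ n₂)
    (m : Fin S → ℕ) (hm : ∀ i, 1 ≤ m i)
    (K₀ : Set (Fin n₁ → ℝ)) (hK₀ : IsCone K₀)
    (Ki : Fin S → Set (Fin n₂ → ℝ)) (hKi : ∀ i, IsCone (Ki i))
    (F : ∀ i : Fin S, Matrix (Fin (m i)) (Fin n₁) ℝ)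
    (G : ∀ i : Fin S, Matrix (Fin (m i)) (Fin n₂) ℝ)
    (r : ∀ i : Fin S, Fin (m i) → ℝ)
    (htriv : ∀ i : Fin S, ∀ x ∈ K₀, ∀ y ∈ Ki i,
      (F i).mulVec x + (G i).mulVec y = 0 → x = 0 ∧ y = 0)
    (Xt : Matrix (Fin 1 ⊕ Fin n₁) (Fin 1 ⊕ Fin n₁) ℝ)
    (Zt : Fin S → Matrix (Fin n₂) (Fin 1 ⊕ Fin n₁) ℝ)
    (Yt : Fin S → Matrix (Fin n₂) (Fin n₂) ℝ)
    (hmem : (Xt, fun i => (Zt i, Yt i)) ∈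
      CMP (SetProd {v : Fin 1 → ℝ | 0 ≤ v 0} K₀) Ki)
    (h11 : Xt (Sum.inl 0) (Sum.inl 0) = 0)
    (horth : ∀ i, frob (Matrix.fromBlocks Xt (Zt i)ᵀ (Zt i) (Yt i))
      ((Matrix.fromCols (Matrix.fromCols
          (Matrix.of fun l (_ : Fin 1) => -r i l) (F i)) (G i))ᵀ *
        (Matrix.fromCols (Matrix.fromCols
          (Matrix.of fun l (_ : Fin 1) => -r i l) (F i)) (G i))) = 0) :
    Xt = 0 ∧ ∀ i, Zt i = 0 ∧ Yt i = 0 :=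
  stmt_13_general S n₁ n₂ hS m K₀ Ki F G r htriv Xt Zt Yt hmem h11 horth
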